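/- arXiv:1105.2378 — 2 statements merged into one kernel-verified Lean document; each statement's English description precedes it below -/
import Mathlib

section
/- Let a₁, a₂ ∈ ℝ, α₁ > α₂ > 0, κ₁ ≥ 0 and κ₂ > 0. For every ξ > 0 with (α₁ − α₂)/2 < 1/ξ² < α₁ − α₂ there exist constants M > 0 and C > 0 such that, with g : ℝ² → ℝ defined by g(x,y) = exp(1/(x+M))·f(ξy/x) for x < −M and g(x,y) = 0 for x ≥ −M, where f(t) = exp(−1/(1−t²)) for t ∈ [−1,1] and f(t) = 0 otherwise, one has (Lg)(z) ≥ C·g(z) for all z ∈ ℝ², and g is strictly positive on U_{ξ,M}. Moreover, if a₁ ≥ a₂, then M can be chosen independently of ξ (i.e., there is a single M > 0 that works for all such ξ, with C allowed to depend on ξ). -/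
noncomputable def Lop (a₁ a₂ α₁ α₂ κ₁ κ₂ : ℝ) (Φ : ℝ × ℝ → ℝ) (p : ℝ × ℝ) : ℝ :=
  (a₁ * p.1 - α₁ * p.1 ^ 2 + p.2 ^ 2) * deriv (fun t => Φ (t, p.2)) p.1
    + (a₂ * p.2 - α₂ * p.1 * p.2) * deriv (fun t => Φ (p.1, t)) p.2
    + κ₁ * deriv (deriv (fun t => Φ (t, p.2))) p.1
    + κ₂ * deriv (deriv (fun t => Φ (p.1, t))) p.2

/-- `φ` is a Lyapunov function for the operator `L` (with the given parameters) on `U`: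
(I) `φ` is `C^∞` on `U`; (II) `φ z → ∞` as `|z| → ∞`, `z ∈ U`;
(III) there are `C, D > 0` with `Lφ ≤ -C•φ + D` on `U`. -/
def IsLyapunovOn (a₁ a₂ α₁ α₂ κ₁ κ₂ : ℝ) (φ : ℝ × ℝ → ℝ) (U : Set (ℝ × ℝ)) : Prop :=
  ContDiffOn ℝ (⊤ : ℕ∞) φ U ∧
    (∀ M : ℝ, ∃ R : ℝ, ∀ z ∈ U, R < ‖z‖ → M < φ z) ∧
    (∃ C > (0:ℝ), ∃ D > (0:ℝ), ∀ z ∈ U, Lop a₁ a₂ α₁ α₂ κ₁ κ₂ φ z ≤ -C * φ z + D)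
/-- The wedge region `U_{ξ,M} = {(x,y) : x < −M and ξ|y| < −x}`. -/
def Uxi (ξ M : ℝ) : Set (ℝ × ℝ) := {p : ℝ × ℝ | p.1 < -M ∧ ξ * |p.2| < -p.1}

/-- The bump function `f(t) = exp(−1/(1−t²))` on `(−1,1)` (which is its value on `[−1,1]`
in the limiting sense) and `0` otherwise. -/
noncomputable def fcut (t : ℝ) : ℝ :=
  if t ∈ Set.Ioo (-1:ℝ) 1 then Real.exp (-1 / (1 - t ^ 2)) else 0

/-- `g(x,y) = exp(1/(x+M))·f(ξy/x)` for `x < −M`, and `0` for `x ≥ −M`. -/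
noncomputable def gfun (ξ M : ℝ) (p : ℝ × ℝ) : ℝ :=
  if p.1 < -M then Real.exp (1 / (p.1 + M)) * fcut (ξ * p.2 / p.1) else 0

/-!
With `φ = expNegInvGlue`, `t = ξy/x`, `v = -(x + M)` and `w = 1 - t²` one has `g = φ(v) φ(w)`.
Since `φ' = φ / v²` and `φ'' = φ (1/v⁴ - 2/v³)`, the operator factors as `Lg = g · R(x, t, v, w)`
for an explicit rational `R`, and `Lg = 0` on `x > -M`, where `g` vanishes identically. On the
support `x < -M`, `t² < 1` we get `R ≥ α₂/8`: since `α₁ - t²/ξ² ≥ α₂`, the drift term is at least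
`α₂ x² / (2v²)` and absorbs the `κ₁`-term of `∂ₓ²φ(v)`; the `t²`-term is nonnegative once
`a₁ - a₂ + (α₁ - α₂ - 1/ξ²) M ≥ 0`; the terms of `∂_y²φ(w)` are nonnegative near the edge `w ≤ w₀`,
where `κ₂ ξ²` dominates, and `O(1 / (w₀³ M²))` elsewhere. The bracket on `1/ξ²` keeps `κ₂ ξ²` in
`[γ, 2γ]` with `γ = κ₂ / (α₁ - α₂)`, so `w₀` and all conditions on `M` except the one on `a₁ - a₂`
are uniform in `ξ`; that one holds for every `M > 0` when `a₂ ≤ a₁`.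
-/

open Filter Topology

noncomputable def expNegInvGlue' (v : ℝ) : ℝ := v⁻¹ ^ 2 * expNegInvGlue v

noncomputable def expNegInvGlue'' (v : ℝ) : ℝ := (v⁻¹ ^ 4 - 2 * v⁻¹ ^ 3) * expNegInvGlue v

theorem hasDerivAt_expNegInvGlue (v : ℝ) :
    HasDerivAt expNegInvGlue (expNegInvGlue' v) v := by
  simpa [expNegInvGlue'] using expNegInvGlue.hasDerivAt_polynomial_eval_inv_mul 1 v

theorem hasDerivAt_expNegInvGlue' (v : ℝ) :
    HasDerivAt expNegInvGlue' (expNegInvGlue'' v) v := by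
  have h := expNegInvGlue.hasDerivAt_polynomial_eval_inv_mul (Polynomial.X ^ 2) v
  simp only [Polynomial.eval_pow, Polynomial.eval_X, Polynomial.derivative_pow,
    Polynomial.derivative_X, Polynomial.eval_mul, Polynomial.eval_sub, Polynomial.eval_C,
    Polynomial.eval_one] at h
  refine h.congr_deriv ?_
  simp only [expNegInvGlue'', Nat.cast_ofNat]
  ring

def HasSecondDerivAt (f f' : ℝ → ℝ) (f'' x : ℝ) : Prop :=
  (∀ᶠ s in 𝓝 x, HasDerivAt f (f' s) s) ∧ HasDerivAt f' f'' x

namespace HasSecondDerivAt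

variable {f f' g g' : ℝ → ℝ} {f'' g'' x : ℝ}

theorem hasDerivAt (hf : HasSecondDerivAt f f' f'' x) : HasDerivAt f (f' x) x :=
  hf.1.self_of_nhds

theorem deriv_deriv (hf : HasSecondDerivAt f f' f'' x) : deriv (deriv f) x = f'' := by
  have h : deriv f =ᶠ[𝓝 x] f' := hf.1.mono fun _ hs => hs.deriv
  rw [h.deriv_eq, hf.2.deriv]

theorem mul (hf : HasSecondDerivAt f f' f'' x) (hg : HasSecondDerivAt g g' g'' x) :
    HasSecondDerivAt (fun s => f s * g s) (fun s => f' s * g s + f s * g' s)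
      (f'' * g x + 2 * (f' x * g' x) + f x * g'') x := by
  refine ⟨?_, ?_⟩
  · filter_upwards [hf.1, hg.1] with s hfs hgs using hfs.mul hgs
  · exact ((hf.2.mul hg.hasDerivAt).add (hf.hasDerivAt.mul hg.2)).congr_deriv (by ring)

theorem const_mul (c : ℝ) (hf : HasSecondDerivAt f f' f'' x) :
    HasSecondDerivAt (fun s => c * f s) (fun s => c * f' s) (c * f'') x :=
  ⟨hf.1.mono fun _ hs => hs.const_mul c, hf.2.const_mul c⟩

theorem expNegInvGlue_comp (hf : HasSecondDerivAt f f' f'' x) :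
    HasSecondDerivAt (fun s => expNegInvGlue (f s)) (fun s => expNegInvGlue' (f s) * f' s)
      (expNegInvGlue'' (f x) * f' x ^ 2 + expNegInvGlue' (f x) * f'') x := by
  refine ⟨hf.1.mono fun s hs => (hasDerivAt_expNegInvGlue (f s)).comp s hs, ?_⟩
  exact (((hasDerivAt_expNegInvGlue' (f x)).comp x hf.hasDerivAt).mul hf.2).congr_deriv
    (by rw [Function.comp_apply]; ring)

end HasSecondDerivAt

theorem hasSecondDerivAt_zero_of_eventuallyEq_zero {f : ℝ → ℝ} {x : ℝ}
    (hf : f =ᶠ[𝓝 x] fun _ => 0) : HasSecondDerivAt f (fun _ => 0) 0 x :=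
  ⟨hf.eventually_nhds.mono fun s hs => (hasDerivAt_const s 0).congr_of_eventuallyEq hs,
    hasDerivAt_const x 0⟩

theorem Lop_eq_of_hasSecondDerivAt {a₁ a₂ α₁ α₂ κ₁ κ₂ : ℝ} {Φ : ℝ × ℝ → ℝ} {x y : ℝ}
    {Φx Φy : ℝ → ℝ} {Φxx Φyy : ℝ}
    (hx : HasSecondDerivAt (fun t => Φ (t, y)) Φx Φxx x)
    (hy : HasSecondDerivAt (fun t => Φ (x, t)) Φy Φyy y) :
    Lop a₁ a₂ α₁ α₂ κ₁ κ₂ Φ (x, y) =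
      (a₁ * x - α₁ * x ^ 2 + y ^ 2) * Φx x + (a₂ * y - α₂ * x * y) * Φy y
        + κ₁ * Φxx + κ₂ * Φyy := by
  rw [Lop, hx.hasDerivAt.deriv, hy.hasDerivAt.deriv, hx.deriv_deriv, hy.deriv_deriv]

theorem fcut_eq_expNegInvGlue (t : ℝ) : fcut t = expNegInvGlue (1 - t ^ 2) := by
  by_cases ht : t ∈ Set.Ioo (-1 : ℝ) 1
  · have h : 0 < 1 - t ^ 2 := by nlinarith [ht.1, ht.2]
    rw [fcut, if_pos ht, expNegInvGlue, if_neg h.not_ge, neg_div, one_div]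
  · rw [fcut, if_neg ht, expNegInvGlue.zero_of_nonpos]
    simp only [Set.mem_Ioo, not_and_or, not_lt] at ht
    rcases ht with h | h <;> nlinarith

theorem gfun_eq (ξ M : ℝ) :
    gfun ξ M = fun p => expNegInvGlue (-(p.1 + M)) * expNegInvGlue (1 - (ξ * p.2 / p.1) ^ 2) := by
  ext ⟨x, y⟩
  rw [gfun, fcut_eq_expNegInvGlue]
  dsimp only
  split_ifs with hx
  · have h : 0 < -(x + M) := by linarith
    congr 1
    rw [expNegInvGlue, if_neg h.not_ge, inv_neg, neg_neg, one_div]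
  · rw [expNegInvGlue.zero_of_nonpos (by linarith), zero_mul]

theorem hasSecondDerivAt_one_sub_div_sq (c : ℝ) {x : ℝ} (hx : x ≠ 0) :
    HasSecondDerivAt (fun s => 1 - (c / s) ^ 2) (fun s => 2 * c ^ 2 / s ^ 3)
      (-6 * c ^ 2 / x ^ 4) x := by
  have key : ∀ s ≠ (0 : ℝ), HasDerivAt (fun s => 1 - (c / s) ^ 2) (2 * c ^ 2 / s ^ 3) s := by
    intro s hs
    refine ((((hasDerivAt_inv hs).const_mul c).pow 2).const_sub 1).congr_deriv ?_
    norm_num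
    field_simp
  refine ⟨(eventually_ne_nhds hx).mono key, ?_⟩
  refine (((hasDerivAt_pow 3 x).inv (pow_ne_zero 3 hx)).const_mul (2 * c ^ 2)).congr_deriv ?_
  field_simp
  ring

theorem hasSecondDerivAt_one_sub_mul_div_sq (c x y : ℝ) :
    HasSecondDerivAt (fun t => 1 - (c * t / x) ^ 2) (fun t => -2 * c ^ 2 * t / x ^ 2)
      (-2 * c ^ 2 / x ^ 2) y := by
  have key : ∀ t, HasDerivAt (fun t => 1 - (c * t / x) ^ 2) (-2 * c ^ 2 * t / x ^ 2) t := by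
    intro t
    refine (((((hasDerivAt_id t).const_mul c).div_const x).pow 2).const_sub 1).congr_deriv ?_
    norm_num
    ring
  refine ⟨Eventually.of_forall key, ?_⟩
  exact (((hasDerivAt_id y).const_mul (-2 * c ^ 2)).div_const (x ^ 2)).congr_deriv (by ring)

/-- The ratio `Lg / g` at `(x, y)`, written in `t = ξy/x`, `v = -(x + M)` and `w = 1 - t²`. -/
noncomputable def lopRatio (a₁ a₂ α₁ α₂ κ₁ κ₂ ξ x t v w : ℝ) : ℝ :=
  2 * t ^ 2 * (a₁ - a₂ + -x * (α₁ - α₂ - t ^ 2 / ξ ^ 2)) / w ^ 2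
    + ((α₁ - t ^ 2 / ξ ^ 2) * x ^ 2 - a₁ * x) / v ^ 2
    + κ₁ * (1 / v ^ 4 - 2 / v ^ 3)
    + 4 * κ₁ * t ^ 2 / (v ^ 2 * w ^ 2 * -x)
    + (1 / w ^ 4 - 2 / w ^ 3) * (4 * κ₁ * t ^ 4 + 4 * (κ₂ * ξ ^ 2) * t ^ 2) / x ^ 2
    - (6 * κ₁ * t ^ 2 + 2 * (κ₂ * ξ ^ 2)) / (w ^ 2 * x ^ 2)

theorem Lop_gfun_of_ne_zero {a₁ a₂ α₁ α₂ κ₁ κ₂ ξ M x y : ℝ} (hξ : ξ ≠ 0) (hx : x ≠ 0) :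
    Lop a₁ a₂ α₁ α₂ κ₁ κ₂ (gfun ξ M) (x, y) =
      gfun ξ M (x, y) *
        lopRatio a₁ a₂ α₁ α₂ κ₁ κ₂ ξ x (ξ * y / x) (-(x + M)) (1 - (ξ * y / x) ^ 2) := by
  have hv : HasSecondDerivAt (fun s => -(s + M)) (fun _ => -1) 0 x :=
    ⟨Eventually.of_forall fun s => ((hasDerivAt_id s).add_const M).neg, hasDerivAt_const x _⟩
  have hX := hv.expNegInvGlue_comp.mul
    (hasSecondDerivAt_one_sub_div_sq (ξ * y) hx).expNegInvGlue_comp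
  have hY := ((hasSecondDerivAt_one_sub_mul_div_sq ξ x y).expNegInvGlue_comp).const_mul
    (expNegInvGlue (-(x + M)))
  rw [gfun_eq, Lop_eq_of_hasSecondDerivAt
    (Φ := fun p => expNegInvGlue (-(p.1 + M)) * expNegInvGlue (1 - (ξ * p.2 / p.1) ^ 2)) hX hY]
  simp only [lopRatio, expNegInvGlue', expNegInvGlue'']
  generalize ht : ξ * y / x = t
  have hy : y = t * x / ξ := by rw [← ht]; field_simp [hx]
  generalize -(x + M) = v
  generalize 1 - t ^ 2 = w
  generalize expNegInvGlue v = E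
  generalize expNegInvGlue w = F
  -- only `x` and `ξ` are known to be nonzero, so `v⁻¹` and `w⁻¹` become atoms
  simp only [div_eq_mul_inv, mul_inv, ← inv_pow, one_mul]
  generalize v⁻¹ = p
  generalize w⁻¹ = q
  subst hy
  field_simp [hx]
  ring

theorem Lop_gfun_of_lt {a₁ a₂ α₁ α₂ κ₁ κ₂ ξ M x y : ℝ} (hx : -M < x) :
    Lop a₁ a₂ α₁ α₂ κ₁ κ₂ (gfun ξ M) (x, y) = 0 := by
  have hzero : ∀ s t, -M ≤ s → gfun ξ M (s, t) = 0 := fun s t hs => if_neg hs.not_gt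
  have hX : HasSecondDerivAt (fun s => gfun ξ M (s, y)) (fun _ => 0) 0 x :=
    hasSecondDerivAt_zero_of_eventuallyEq_zero <| by
      filter_upwards [Ioi_mem_nhds hx] with s hs using hzero s y hs.le
  have hY : HasSecondDerivAt (fun t => gfun ξ M (x, t)) (fun _ => 0) 0 y :=
    hasSecondDerivAt_zero_of_eventuallyEq_zero (Eventually.of_forall fun t => hzero x t hx.le)
  rw [Lop_eq_of_hasSecondDerivAt hX hY]
  ring

theorem half_mul_sq_le_sub_mul {α a c x : ℝ} (hα : α ≤ c) (hx : x ≤ 0) (ha : 2 * |a| ≤ α * -x) :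
    α / 2 * x ^ 2 ≤ c * x ^ 2 - a * x := by
  have hax : a * x ≤ |a| * -x := by nlinarith [neg_abs_le a, le_abs_self a]
  nlinarith [mul_le_mul_of_nonneg_right hα (sq_nonneg x)]

theorem neg_le_mul_one_div_pow_four_sub {α κ v x M : ℝ} (hα : 0 ≤ α) (hκ : 0 ≤ κ) (hv : 0 < v)
    (hκM : 16 * κ ≤ α * M ^ 2) (hMx : M ^ 2 ≤ x ^ 2) :
    -(α / 4 * (x ^ 2 / v ^ 2)) ≤ κ * (1 / v ^ 4 - 2 / v ^ 3) := by
  have key : 0 ≤ κ * (1 - 2 * v) + α / 4 * x ^ 2 * v ^ 2 := by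
    have hαx : 16 * κ ≤ α * x ^ 2 := hκM.trans (mul_le_mul_of_nonneg_left hMx hα)
    nlinarith [mul_le_mul_of_nonneg_right hαx (sq_nonneg v),
      mul_nonneg hκ (sq_nonneg (2 * v - 1 / 2))]
  have heq : κ * (1 / v ^ 4 - 2 / v ^ 3) + α / 4 * (x ^ 2 / v ^ 2) =
      (κ * (1 - 2 * v) + α / 4 * x ^ 2 * v ^ 2) / v ^ 4 := by
    field_simp
  have := div_nonneg key (pow_nonneg hv.le 4)
  linarith

theorem neg_div_le_diffusion_terms {κ s K w₀ t w x M : ℝ} (hκ : 0 ≤ κ) (hs : 0 ≤ s)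
    (hK : 14 * κ + 10 * s ≤ K) (hKw₀ : K * w₀ ≤ 2 * s) (hw₀ : 0 < w₀) (hw : 0 < w)
    (htw : t ^ 2 = 1 - w) (hM : 0 < M) (hMx : M ^ 2 ≤ x ^ 2) :
    -(K / (w₀ ^ 3 * M ^ 2)) ≤
      (1 / w ^ 4 - 2 / w ^ 3) * (4 * κ * t ^ 4 + 4 * s * t ^ 2) / x ^ 2
        - (6 * κ * t ^ 2 + 2 * s) / (w ^ 2 * x ^ 2) := by
  set A := 4 * κ * t ^ 4 + 4 * s * t ^ 2
  set B := 6 * κ * t ^ 2 + 2 * s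
  have hx : 0 < x ^ 2 := (pow_pos hM 2).trans_le hMx
  have ht : t ^ 2 ≤ 1 := by linarith
  have hw1 : w ≤ 1 := by linarith [sq_nonneg t]
  have hA : 4 * s * (1 - w) ≤ A := by nlinarith [mul_nonneg hκ (pow_nonneg (sq_nonneg t) 2)]
  have hAB : 2 * A + B ≤ K := by
    have : t ^ 4 ≤ 1 := by nlinarith [sq_nonneg t]
    nlinarith [mul_le_mul_of_nonneg_left ht hs, mul_le_mul_of_nonneg_left ht hκ,
      mul_le_mul_of_nonneg_left this hκ]
  have hN : A - K * w ≤ A - 2 * A * w - B * w ^ 2 := by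
    have : B * w ^ 2 ≤ B * w := by
      have hB : 0 ≤ B := by positivity
      nlinarith [mul_le_mul_of_nonneg_left hw1 (mul_nonneg hB hw.le)]
    nlinarith
  have heq : (1 / w ^ 4 - 2 / w ^ 3) * A / x ^ 2 - B / (w ^ 2 * x ^ 2) =
      (A - 2 * A * w - B * w ^ 2) / (w ^ 4 * x ^ 2) := by
    field_simp
  rw [heq]
  have hK0 : 0 ≤ K := by linarith
  rcases le_or_gt w w₀ with hww₀ | hww₀
  · have : 0 ≤ A - 2 * A * w - B * w ^ 2 := by
      nlinarith [mul_le_mul_of_nonneg_left hww₀ hK0, mul_le_mul_of_nonneg_left hww₀ hs]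
    have := div_nonneg this (by positivity : (0 : ℝ) ≤ w ^ 4 * x ^ 2)
    have : 0 ≤ K / (w₀ ^ 3 * M ^ 2) := by positivity
    linarith
  · have hA0 : 0 ≤ A := by positivity
    calc -(K / (w₀ ^ 3 * M ^ 2)) ≤ -(K / (w ^ 3 * x ^ 2)) :=
          neg_le_neg (div_le_div_of_nonneg_left hK0 (by positivity)
            (mul_le_mul (pow_le_pow_left₀ hw₀.le hww₀.le 3) hMx (by positivity) (by positivity)))
      _ = -(K * w) / (w ^ 4 * x ^ 2) := by field_simp
      _ ≤ (A - 2 * A * w - B * w ^ 2) / (w ^ 4 * x ^ 2) :=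
          div_le_div_of_nonneg_right (by linarith) (by positivity)

def IsAdmissibleScale (a₁ α₂ κ₁ K w₀ M : ℝ) : Prop :=
  0 < M ∧ 2 * |a₁| ≤ α₂ * M ∧ 16 * κ₁ ≤ α₂ * M ^ 2 ∧ 8 * K ≤ α₂ * w₀ ^ 3 * M ^ 2

theorem eventually_isAdmissibleScale (a₁ κ₁ K : ℝ) {α₂ w₀ : ℝ} (hα₂ : 0 < α₂) (hw₀ : 0 < w₀) :
    ∀ᶠ M in atTop, IsAdmissibleScale a₁ α₂ κ₁ K w₀ M := by
  have hsq := tendsto_pow_atTop (α := ℝ) two_ne_zero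
  exact (eventually_gt_atTop 0).and ((tendsto_id.const_mul_atTop hα₂).eventually_ge_atTop _
    |>.and (((hsq.const_mul_atTop hα₂).eventually_ge_atTop _).and
      ((hsq.const_mul_atTop (by positivity)).eventually_ge_atTop _)))

theorem le_lopRatio {a₁ a₂ α₁ α₂ κ₁ κ₂ ξ K w₀ M x t : ℝ} (hα₂ : 0 < α₂) (hκ₁ : 0 ≤ κ₁)
    (hκ₂ : 0 ≤ κ₂) (hξ : 0 < ξ) (hξα : 1 / ξ ^ 2 ≤ α₁ - α₂)
    (hK : 14 * κ₁ + 10 * (κ₂ * ξ ^ 2) ≤ K) (hKw₀ : K * w₀ ≤ 2 * (κ₂ * ξ ^ 2)) (hw₀ : 0 < w₀)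
    (hM : IsAdmissibleScale a₁ α₂ κ₁ K w₀ M) (hA : a₂ - a₁ ≤ (α₁ - α₂ - 1 / ξ ^ 2) * M)
    (hx : x < -M) (ht : t ^ 2 < 1) :
    α₂ / 8 ≤ lopRatio a₁ a₂ α₁ α₂ κ₁ κ₂ ξ x t (-(x + M)) (1 - t ^ 2) := by
  obtain ⟨hM, ha₁, hκ₁M, hKM⟩ := hM
  have hv : 0 < -(x + M) := by linarith
  have hw : 0 < 1 - t ^ 2 := by linarith
  have htξ : t ^ 2 / ξ ^ 2 ≤ 1 / ξ ^ 2 := div_le_div_of_nonneg_right ht.le (by positivity)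
  have hMx : M ^ 2 ≤ x ^ 2 := by nlinarith
  have h1 : 0 ≤ 2 * t ^ 2 * (a₁ - a₂ + -x * (α₁ - α₂ - t ^ 2 / ξ ^ 2)) / (1 - t ^ 2) ^ 2 := by
    have : M * (α₁ - α₂ - 1 / ξ ^ 2) ≤ -x * (α₁ - α₂ - t ^ 2 / ξ ^ 2) :=
      mul_le_mul (by linarith) (by linarith) (by linarith) (by linarith)
    have : 0 ≤ a₁ - a₂ + -x * (α₁ - α₂ - t ^ 2 / ξ ^ 2) := by linarith
    positivity
  have h2 : α₂ / 2 * (x ^ 2 / (-(x + M)) ^ 2) ≤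
      ((α₁ - t ^ 2 / ξ ^ 2) * x ^ 2 - a₁ * x) / (-(x + M)) ^ 2 := by
    rw [← mul_div_assoc]
    refine div_le_div_of_nonneg_right (half_mul_sq_le_sub_mul (by linarith) (by linarith) ?_)
      (by positivity)
    exact ha₁.trans (by nlinarith)
  have h3 := neg_le_mul_one_div_pow_four_sub (x := x) hα₂.le hκ₁ hv hκ₁M hMx
  have h4 : 0 ≤ 4 * κ₁ * t ^ 2 / ((-(x + M)) ^ 2 * (1 - t ^ 2) ^ 2 * -x) :=
    div_nonneg (by positivity) (mul_nonneg (by positivity) (by linarith))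
  have h56 := neg_div_le_diffusion_terms (t := t) (x := x) hκ₁ (by positivity) hK hKw₀ hw₀ hw
    (by ring) hM hMx
  have hKM' : K / (w₀ ^ 3 * M ^ 2) ≤ α₂ / 8 := by
    rw [div_le_iff₀ (by positivity)]
    linarith
  have hxv : α₂ / 4 ≤ α₂ / 4 * (x ^ 2 / (-(x + M)) ^ 2) := by
    refine le_mul_of_one_le_right (by positivity) ?_
    rw [one_le_div (by positivity)]
    nlinarith
  rw [lopRatio]
  linarith

theorem gfun_nonneg (ξ M : ℝ) (p : ℝ × ℝ) : 0 ≤ gfun ξ M p := by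
  rw [gfun_eq]
  exact mul_nonneg (expNegInvGlue.nonneg _) (expNegInvGlue.nonneg _)

theorem gfun_pos_of_mem_Uxi {ξ M : ℝ} (hξ : 0 ≤ ξ) {p : ℝ × ℝ} (hp : p ∈ Uxi ξ M) :
    0 < gfun ξ M p := by
  obtain ⟨hxM, hy⟩ := hp
  have hx : 0 < -p.1 := (mul_nonneg hξ (abs_nonneg _)).trans_lt hy
  rw [gfun_eq]
  refine mul_pos (expNegInvGlue.pos_of_pos (by linarith)) (expNegInvGlue.pos_of_pos ?_)
  have : |ξ * p.2 / p.1| < 1 := by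
    rw [abs_div, abs_mul, abs_of_nonneg hξ, abs_of_neg (neg_pos.mp hx), div_lt_one hx]
    exact hy
  linarith [(sq_lt_one_iff_abs_lt_one _).2 this]

theorem mul_gfun_le_Lop {a₁ a₂ α₁ α₂ κ₁ κ₂ ξ K w₀ M : ℝ} (hα₂ : 0 < α₂) (hκ₁ : 0 ≤ κ₁)
    (hκ₂ : 0 ≤ κ₂) (hξ : 0 < ξ) (hξα : 1 / ξ ^ 2 ≤ α₁ - α₂)
    (hK : 14 * κ₁ + 10 * (κ₂ * ξ ^ 2) ≤ K) (hKw₀ : K * w₀ ≤ 2 * (κ₂ * ξ ^ 2)) (hw₀ : 0 < w₀)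
    (hM : IsAdmissibleScale a₁ α₂ κ₁ K w₀ M) (hA : a₂ - a₁ ≤ (α₁ - α₂ - 1 / ξ ^ 2) * M)
    (z : ℝ × ℝ) : α₂ / 8 * gfun ξ M z ≤ Lop a₁ a₂ α₁ α₂ κ₁ κ₂ (gfun ξ M) z := by
  obtain ⟨x, y⟩ := z
  rcases lt_or_ge (-M) x with hx | hx
  · rw [Lop_gfun_of_lt hx, gfun, if_neg hx.not_gt, mul_zero]
  rw [Lop_gfun_of_ne_zero hξ.ne' (by linarith [hM.1] : x < 0).ne, mul_comm]
  by_cases hg : gfun ξ M (x, y) = 0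
  · simp [hg]
  have hg' := hg
  simp only [gfun_eq, mul_ne_zero_iff, ne_eq, expNegInvGlue.zero_iff_nonpos, not_le] at hg'
  refine mul_le_mul_of_nonneg_left ?_ (gfun_nonneg ξ M _)
  exact le_lopRatio hα₂ hκ₁ hκ₂ hξ hξα hK hKw₀ hw₀ hM hA (by linarith) (by linarith [hg'.2])

theorem div_le_mul_sq_and_mul_sq_le {κ d ξ : ℝ} (hκ : 0 ≤ κ) (hξ : ξ ≠ 0) (h₁ : d / 2 < 1 / ξ ^ 2)
    (h₂ : 1 / ξ ^ 2 < d) : κ / d ≤ κ * ξ ^ 2 ∧ κ * ξ ^ 2 ≤ 2 * (κ / d) := by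
  have hξ2 : 0 < ξ ^ 2 := by positivity
  have hd : 0 < d := (one_div_pos.2 hξ2).trans h₂
  rw [div_lt_iff₀ hξ2] at h₂
  rw [lt_div_iff₀ hξ2] at h₁
  constructor
  · rw [div_le_iff₀ hd]
    nlinarith
  · rw [mul_div_assoc', le_div_iff₀ hd]
    nlinarith

/-- if `α₁ > α₂ > 0`, for every `ξ` with `(α₁−α₂)/2 < 1/ξ² < α₁−α₂` there are
`M, C > 0` with `Lg ≥ C·g` on `ℝ²` and `g > 0` on `U_{ξ,M}`; if moreover `a₁ ≥ a₂`, a single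
`M` works for all such `ξ`. -/
theorem statement18 (a₁ a₂ α₁ α₂ κ₁ κ₂ : ℝ) (hα₂ : 0 < α₂) (hα : α₂ < α₁)
    (hκ₁ : 0 ≤ κ₁) (hκ₂ : 0 < κ₂) :
    (∀ ξ : ℝ, 0 < ξ → (α₁ - α₂) / 2 < 1 / ξ ^ 2 → 1 / ξ ^ 2 < α₁ - α₂ →
      ∃ M > (0:ℝ), ∃ C > (0:ℝ),
        (∀ z : ℝ × ℝ, C * gfun ξ M z ≤ Lop a₁ a₂ α₁ α₂ κ₁ κ₂ (gfun ξ M) z) ∧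
        ∀ p ∈ Uxi ξ M, 0 < gfun ξ M p) ∧
    (a₂ ≤ a₁ →
      ∃ M > (0:ℝ), ∀ ξ : ℝ, 0 < ξ → (α₁ - α₂) / 2 < 1 / ξ ^ 2 → 1 / ξ ^ 2 < α₁ - α₂ →
        ∃ C > (0:ℝ),
          (∀ z : ℝ × ℝ, C * gfun ξ M z ≤ Lop a₁ a₂ α₁ α₂ κ₁ κ₂ (gfun ξ M) z) ∧
          ∀ p ∈ Uxi ξ M, 0 < gfun ξ M p) := by
  set γ := κ₂ / (α₁ - α₂)
  set K := 14 * κ₁ + 20 * γ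
  have hγ : 0 < γ := div_pos hκ₂ (sub_pos.2 hα)
  have hK : 0 < K := by positivity
  have hM := eventually_isAdmissibleScale a₁ κ₁ K hα₂ (div_pos hγ hK)
  have hgood : ∀ ξ M, 0 < ξ → (α₁ - α₂) / 2 < 1 / ξ ^ 2 → 1 / ξ ^ 2 < α₁ - α₂ →
      IsAdmissibleScale a₁ α₂ κ₁ K (γ / K) M → a₂ - a₁ ≤ (α₁ - α₂ - 1 / ξ ^ 2) * M →
      ∃ C > (0:ℝ), (∀ z, C * gfun ξ M z ≤ Lop a₁ a₂ α₁ α₂ κ₁ κ₂ (gfun ξ M) z) ∧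
        ∀ p ∈ Uxi ξ M, 0 < gfun ξ M p := by
    intro ξ M hξ h₁ h₂ hM hA
    obtain ⟨hs₁, hs₂⟩ := div_le_mul_sq_and_mul_sq_le hκ₂.le hξ.ne' h₁ h₂
    refine ⟨α₂ / 8, by positivity, mul_gfun_le_Lop hα₂ hκ₁ hκ₂.le hξ h₂.le (by linarith) ?_
      (div_pos hγ hK) hM hA, fun p hp => gfun_pos_of_mem_Uxi hξ.le hp⟩
    rw [mul_div_cancel₀ _ hK.ne']
    linarith
  refine ⟨fun ξ hξ h₁ h₂ => ?_, fun ha => ?_⟩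
  · obtain ⟨M, hM, hA⟩ := (hM.and ((tendsto_id.const_mul_atTop (sub_pos.2 h₂)).eventually_ge_atTop
      (a₂ - a₁))).exists
    exact ⟨M, hM.1, hgood ξ M hξ h₁ h₂ hM hA⟩
  · obtain ⟨M, hM⟩ := hM.exists
    exact ⟨M, hM.1, fun ξ hξ h₁ h₂ => hgood ξ M hξ h₁ h₂ hM
      (by nlinarith [mul_pos (sub_pos.2 h₂) hM.1])⟩
end

section
/- Let a₁, a₂ ∈ ℝ, α₁ > α₂ > 0, κ₁ ≥ 0 and κ₂ > 0. Then there exist a bounded C^∞ function Ψ : ℝ² → [0, ∞), a nonempty open set A ⊆ ℝ² on which Ψ is strictly positive, and a constant E > 0 such that (LΨ)(z) ≥ E·Ψ(z) for all z ∈ ℝ². -/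
open Filter Topology Set Real

theorem IsLocalMin.deriv_deriv_nonneg {f : ℝ → ℝ} {x : ℝ} (h : IsLocalMin f x)
    (hc : ContinuousAt f x) : 0 ≤ deriv (deriv f) x := by
  by_contra! hneg
  have hmax : IsLocalMax f x := isLocalMax_of_deriv_deriv_neg hneg h.deriv_eq_zero hc
  have hconst : f =ᶠ[𝓝 x] fun _ => f x := by
    filter_upwards [h, hmax] with t hmin hmax' using le_antisymm hmax' hmin
  have hzero : deriv (deriv f) x = 0 := by
    rw [hconst.deriv.deriv_eq]
    simp
  exact hneg.ne hzero

theorem deriv_and_deriv_deriv_of_eventuallyEq_exp_neg {f φ φ' : ℝ → ℝ} {φ'' x : ℝ}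
    (hf : f =ᶠ[𝓝 x] fun t => rexp (-φ t)) (hφ : ∀ᶠ t in 𝓝 x, HasDerivAt φ (φ' t) t)
    (hφ' : HasDerivAt φ' φ'' x) :
    deriv f x = -φ' x * f x ∧ deriv (deriv f) x = (φ' x ^ 2 - φ'') * f x := by
  have hderiv : deriv f =ᶠ[𝓝 x] fun t => rexp (-φ t) * -φ' t := by
    filter_upwards [hf.eventuallyEq_nhds, hφ] with t hft hφt
    exact hft.deriv_eq.trans hφt.fun_neg.exp.deriv
  have hderiv' := hφ.self_of_nhds.fun_neg.exp.fun_mul hφ'.fun_neg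
  rw [hf.eq_of_nhds, hderiv.eq_of_nhds, hderiv.deriv_eq, hderiv'.deriv]
  constructor <;> ring

theorem Lop_nonneg_of_isMinOn (a₁ a₂ α₁ α₂ : ℝ) {κ₁ κ₂ : ℝ} (hκ₁ : 0 ≤ κ₁) (hκ₂ : 0 ≤ κ₂)
    {Φ : ℝ × ℝ → ℝ} (hΦ : Continuous Φ) {p : ℝ × ℝ} (hp : IsMinOn Φ univ p) :
    0 ≤ Lop a₁ a₂ α₁ α₂ κ₁ κ₂ Φ p := by
  have hx : IsLocalMin (fun t => Φ (t, p.2)) p.1 :=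
    Eventually.of_forall fun t => hp (mem_univ (t, p.2))
  have hy : IsLocalMin (fun t => Φ (p.1, t)) p.2 :=
    Eventually.of_forall fun t => hp (mem_univ (p.1, t))
  have hxx := hx.deriv_deriv_nonneg (hΦ.comp (by fun_prop)).continuousAt
  have hyy := hy.deriv_deriv_nonneg (hΦ.comp (by fun_prop)).continuousAt
  rw [Lop, hx.deriv_eq_zero, hy.deriv_eq_zero]
  simp only [mul_zero, zero_add]
  positivity

theorem Lop_eq_mul_of_eventuallyEq_exp_neg (a₁ a₂ α₁ α₂ κ₁ κ₂ : ℝ) {Φ : ℝ × ℝ → ℝ}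
    {p : ℝ × ℝ} {φ₁ φ₁' φ₂ φ₂' : ℝ → ℝ} {φ₁'' φ₂'' : ℝ}
    (h₁ : (fun t => Φ (t, p.2)) =ᶠ[𝓝 p.1] fun t => rexp (-φ₁ t))
    (hφ₁ : ∀ᶠ t in 𝓝 p.1, HasDerivAt φ₁ (φ₁' t) t) (hφ₁' : HasDerivAt φ₁' φ₁'' p.1)
    (h₂ : (fun t => Φ (p.1, t)) =ᶠ[𝓝 p.2] fun t => rexp (-φ₂ t))
    (hφ₂ : ∀ᶠ t in 𝓝 p.2, HasDerivAt φ₂ (φ₂' t) t) (hφ₂' : HasDerivAt φ₂' φ₂'' p.2) :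
    Lop a₁ a₂ α₁ α₂ κ₁ κ₂ Φ p = Φ p * (-(a₁ * p.1 - α₁ * p.1 ^ 2 + p.2 ^ 2) * φ₁' p.1
      - (a₂ * p.2 - α₂ * p.1 * p.2) * φ₂' p.2
      + κ₁ * (φ₁' p.1 ^ 2 - φ₁'') + κ₂ * (φ₂' p.2 ^ 2 - φ₂'')) := by
  obtain ⟨hd₁, hdd₁⟩ := deriv_and_deriv_deriv_of_eventuallyEq_exp_neg h₁ hφ₁ hφ₁'
  obtain ⟨hd₂, hdd₂⟩ := deriv_and_deriv_deriv_of_eventuallyEq_exp_neg h₂ hφ₂ hφ₂'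
  rw [Lop, hd₁, hdd₁, hd₂, hdd₂]
  ring

theorem expNegInvGlue_of_pos {x : ℝ} (hx : 0 < x) : expNegInvGlue x = rexp (-x⁻¹) := by
  rw [expNegInvGlue, if_neg hx.not_ge]

theorem expNegInvGlue_le_one (x : ℝ) : expNegInvGlue x ≤ 1 := by
  rcases le_or_gt x 0 with hx | hx
  · simp [expNegInvGlue.zero_of_nonpos hx]
  · rw [expNegInvGlue_of_pos hx, exp_le_one_iff, neg_nonpos]
    exact (inv_pos.2 hx).le

def wedge (M c : ℝ) : Set (ℝ × ℝ) := {p | 0 < -p.1 - M ∧ 0 < c * p.1 ^ 2 - p.2 ^ 2}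

noncomputable def wedgeBump (M β c γ : ℝ) (p : ℝ × ℝ) : ℝ :=
  expNegInvGlue ((-p.1 - M) / β) * expNegInvGlue ((c * p.1 ^ 2 - p.2 ^ 2) / γ)

section WedgeBump

variable {M β c γ : ℝ}

theorem isOpen_wedge : IsOpen (wedge M c) := by
  rw [wedge, ofPred_and]
  exact (isOpen_lt continuous_const (by fun_prop)).inter (isOpen_lt continuous_const (by fun_prop))

theorem wedge_nonempty (hc : 0 < c) : (wedge M c).Nonempty := by
  refine ⟨(-(|M| + 1), 0), ?_, ?_⟩
  · show 0 < -(-(|M| + 1)) - M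
    linarith [le_abs_self M]
  · show 0 < c * (-(|M| + 1)) ^ 2 - 0 ^ 2
    have : 0 < (|M| + 1) ^ 2 := by positivity
    nlinarith

theorem contDiff_wedgeBump {n : ℕ∞} : ContDiff ℝ n (wedgeBump M β c γ) :=
  (expNegInvGlue.contDiff.comp (by fun_prop)).mul (expNegInvGlue.contDiff.comp (by fun_prop))

theorem wedgeBump_nonneg (p : ℝ × ℝ) : 0 ≤ wedgeBump M β c γ p :=
  mul_nonneg (expNegInvGlue.nonneg _) (expNegInvGlue.nonneg _)

theorem wedgeBump_le_one (p : ℝ × ℝ) : wedgeBump M β c γ p ≤ 1 :=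
  mul_le_one₀ (expNegInvGlue_le_one _) (expNegInvGlue.nonneg _) (expNegInvGlue_le_one _)

theorem wedgeBump_pos {p : ℝ × ℝ} (hp : p ∈ wedge M c) (hβ : 0 < β) (hγ : 0 < γ) :
    0 < wedgeBump M β c γ p :=
  mul_pos (expNegInvGlue.pos_of_pos (div_pos hp.1 hβ))
    (expNegInvGlue.pos_of_pos (div_pos hp.2 hγ))

theorem wedgeBump_eq_zero {p : ℝ × ℝ} (hp : p ∉ wedge M c) (hβ : 0 ≤ β) (hγ : 0 ≤ γ) :
    wedgeBump M β c γ p = 0 := by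
  have hp' : -p.1 - M ≤ 0 ∨ c * p.1 ^ 2 - p.2 ^ 2 ≤ 0 := by
    by_contra! hcon
    exact hp hcon
  rcases hp' with hp | hp
  · rw [wedgeBump, expNegInvGlue.zero_of_nonpos (div_nonpos_of_nonpos_of_nonneg hp hβ), zero_mul]
  · rw [wedgeBump, expNegInvGlue.zero_of_nonpos (div_nonpos_of_nonpos_of_nonneg hp hγ), mul_zero]

theorem wedgeBump_eq_exp_neg {p : ℝ × ℝ} (hp : p ∈ wedge M c) (hβ : 0 < β) (hγ : 0 < γ) :
    wedgeBump M β c γ p = rexp (-(β / (-p.1 - M) + γ / (c * p.1 ^ 2 - p.2 ^ 2))) := by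
  rw [wedgeBump, expNegInvGlue_of_pos (div_pos hp.1 hβ), expNegInvGlue_of_pos (div_pos hp.2 hγ),
    ← exp_add, inv_div, inv_div, neg_add]

end WedgeBump

section WedgePotential

variable {M β c γ x y : ℝ}

theorem hasDerivAt_wedgePotential_fst (hw : -x - M ≠ 0) (hτ : c * x ^ 2 - y ^ 2 ≠ 0) :
    HasDerivAt (fun t => β / (-t - M) + γ / (c * t ^ 2 - y ^ 2))
      (β / (-x - M) ^ 2 - 2 * c * γ * x / (c * x ^ 2 - y ^ 2) ^ 2) x := by
  have hw' : HasDerivAt (fun t => -t - M) (-1) x := (hasDerivAt_neg x).sub_const M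
  have hτ' : HasDerivAt (fun t => c * t ^ 2 - y ^ 2) (c * (2 * x)) x := by
    simpa using ((hasDerivAt_pow 2 x).const_mul c).sub_const (y ^ 2)
  refine (((hasDerivAt_const x β).fun_div hw' hw).fun_add
    ((hasDerivAt_const x γ).fun_div hτ' hτ)).congr_deriv ?_
  ring

theorem hasDerivAt_wedgePotential_fst_deriv (hw : -x - M ≠ 0) (hτ : c * x ^ 2 - y ^ 2 ≠ 0) :
    HasDerivAt (fun t => β / (-t - M) ^ 2 - 2 * c * γ * t / (c * t ^ 2 - y ^ 2) ^ 2)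
      (2 * β / (-x - M) ^ 3 - 2 * c * γ / (c * x ^ 2 - y ^ 2) ^ 2
        + 8 * c ^ 2 * γ * x ^ 2 / (c * x ^ 2 - y ^ 2) ^ 3) x := by
  have hw' : HasDerivAt (fun t => (-t - M) ^ 2) (2 * (-x - M) * (-1)) x := by
    simpa using ((hasDerivAt_neg x).sub_const M).fun_pow 2
  have hτ' : HasDerivAt (fun t => (c * t ^ 2 - y ^ 2) ^ 2)
      (2 * (c * x ^ 2 - y ^ 2) * (c * (2 * x))) x := by
    simpa using (((hasDerivAt_pow 2 x).const_mul c).sub_const (y ^ 2)).fun_pow 2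
  have hlin : HasDerivAt (fun t => 2 * c * γ * t) (2 * c * γ) x := by
    simpa using (hasDerivAt_id x).const_mul (2 * c * γ)
  refine (((hasDerivAt_const x β).fun_div hw' (pow_ne_zero 2 hw)).fun_sub
    (hlin.fun_div hτ' (pow_ne_zero 2 hτ))).congr_deriv ?_
  generalize -x - M = w at hw ⊢
  generalize c * x ^ 2 - y ^ 2 = τ at hτ ⊢
  field_simp
  ring

theorem hasDerivAt_wedgePotential_snd (hτ : c * x ^ 2 - y ^ 2 ≠ 0) :
    HasDerivAt (fun s => β / (-x - M) + γ / (c * x ^ 2 - s ^ 2))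
      (2 * γ * y / (c * x ^ 2 - y ^ 2) ^ 2) y := by
  have hτ' : HasDerivAt (fun s => c * x ^ 2 - s ^ 2) (-(2 * y)) y := by
    simpa using (hasDerivAt_pow 2 y).const_sub (c * x ^ 2)
  refine ((hasDerivAt_const y _).fun_add
    ((hasDerivAt_const y γ).fun_div hτ' hτ)).congr_deriv ?_
  ring

theorem hasDerivAt_wedgePotential_snd_deriv (hτ : c * x ^ 2 - y ^ 2 ≠ 0) :
    HasDerivAt (fun s => 2 * γ * s / (c * x ^ 2 - s ^ 2) ^ 2)
      (2 * γ / (c * x ^ 2 - y ^ 2) ^ 2 + 8 * γ * y ^ 2 / (c * x ^ 2 - y ^ 2) ^ 3) y := by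
  have hτ' : HasDerivAt (fun s => (c * x ^ 2 - s ^ 2) ^ 2)
      (2 * (c * x ^ 2 - y ^ 2) * -(2 * y)) y := by
    simpa using ((hasDerivAt_pow 2 y).const_sub (c * x ^ 2)).fun_pow 2
  have hlin : HasDerivAt (fun s => 2 * γ * s) (2 * γ) y := by
    simpa using (hasDerivAt_id y).const_mul (2 * γ)
  refine (hlin.fun_div hτ' (pow_ne_zero 2 hτ)).congr_deriv ?_
  generalize c * x ^ 2 - y ^ 2 = τ at hτ ⊢
  field_simp
  ring

end WedgePotential

/-! In the estimates below `x = -m`, `w = m - M` and `τ = c m² - y²`. -/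

section Estimates

variable {a₁ a₂ α₁ α₂ κ₁ κ₂ c β γ M m y w τ : ℝ}

theorem drift_fst_le (hα₂ : 0 < α₂) (hα : α₁ = α₂ + 2 * c) (ha₁ : 2 * |a₁| ≤ α₂ * M)
    (hMm : M < m) (hM : 0 < M) (hy : y ^ 2 ≤ c * m ^ 2) :
    a₁ * (-m) - α₁ * (-m) ^ 2 + y ^ 2 ≤ -(α₁ / 2) * m ^ 2 := by
  have hm : 0 < m := hM.trans hMm
  have h1 : -(a₁ * m) ≤ |a₁| * m := by nlinarith [neg_abs_le a₁]
  have h2 : 2 * |a₁| ≤ α₂ * m := by nlinarith [abs_nonneg a₁]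
  nlinarith [mul_le_mul_of_nonneg_right h2 hm.le]

theorem three_le_drift_barrier (hα₂ : 0 < α₂) (hα : α₁ = α₂ + 2 * c)
    (ha₁ : 2 * |a₁| ≤ α₂ * M) (hMm : M < m) (hM : 0 < M) (hy : y ^ 2 ≤ c * m ^ 2) (hβ : 0 < β)
    (hαβ : 6 ≤ α₁ * β) (hw : 0 < w) (hwm : w ≤ m) :
    3 ≤ -(a₁ * (-m) - α₁ * (-m) ^ 2 + y ^ 2) * (β / w ^ 2) := by
  have hb := drift_fst_le hα₂ hα ha₁ hMm hM hy
  have hw2 : w ^ 2 ≤ m ^ 2 := by nlinarith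
  have hα₁ : 0 < α₁ := by nlinarith
  rw [← mul_div_assoc, le_div_iff₀ (by positivity)]
  have h6 : 6 * w ^ 2 ≤ α₁ * β * m ^ 2 := by gcongr
  nlinarith [mul_le_mul_of_nonneg_right hb hβ.le]

/-- The left-hand side is the quantity `S` that absorbs the negative parts of the diffusion
terms. -/
theorem le_drift_wedge (hα₂ : 0 < α₂) (hα : α₁ = α₂ + 2 * c) (hc : 0 < c) (hγ : 0 < γ)
    (ha : 2 * |a₁ - a₂| ≤ c * M) (ha₂ : |a₂| ≤ c * M) (hMm : M < m) (hM : 0 < M)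
    (hτ : 0 < τ) (hy : y ^ 2 = c * m ^ 2 - τ) :
    γ * c ^ 2 * m ^ 3 / τ ^ 2
      ≤ (a₁ * (-m) - α₁ * (-m) ^ 2 + y ^ 2) * (-2 * c * γ * m / τ ^ 2)
        - (a₂ * y - α₂ * (-m) * y) * (2 * γ * y / τ ^ 2) := by
  have hm : 0 < m := hM.trans hMm
  have h₁ : 0 ≤ 2 * c * γ * m ^ 2 * ((a₁ - a₂) + c * m / 2) := by
    have : -(c * m) / 2 ≤ a₁ - a₂ := by nlinarith [neg_abs_le (a₁ - a₂)]
    apply mul_nonneg (by positivity)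
    linarith
  have h₂ : 0 ≤ 2 * γ * τ * ((a₂ + c * m) + α₂ * m) := by
    have : -(c * m) ≤ a₂ := by nlinarith [neg_abs_le a₂]
    apply mul_nonneg (by positivity)
    nlinarith
  have hnum : (a₁ * (-m) - α₁ * (-m) ^ 2 + y ^ 2) * (-2 * c * γ * m)
      - (a₂ * y - α₂ * (-m) * y) * (2 * γ * y) = γ * c ^ 2 * m ^ 3
        + 2 * c * γ * m ^ 2 * ((a₁ - a₂) + c * m / 2)
        + 2 * γ * τ * ((a₂ + c * m) + α₂ * m) := by
    rw [hα]
    linear_combination (-(2 * γ * (c * m + a₂ + α₂ * m))) * hy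
  have e : (a₁ * (-m) - α₁ * (-m) ^ 2 + y ^ 2) * (-2 * c * γ * m / τ ^ 2)
      - (a₂ * y - α₂ * (-m) * y) * (2 * γ * y / τ ^ 2)
      = ((a₁ * (-m) - α₁ * (-m) ^ 2 + y ^ 2) * (-2 * c * γ * m)
        - (a₂ * y - α₂ * (-m) * y) * (2 * γ * y)) / τ ^ 2 := by
    ring
  rw [e, hnum]
  gcongr
  linarith

theorem neg_one_le_diffusion_barrier (hκ₁ : 0 ≤ κ₁) (hβ : 1 ≤ β) (hκβ : 16 * κ₁ ≤ β ^ 2)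
    (hw : 0 < w) : -1 ≤ κ₁ * (β ^ 2 / w ^ 4 - 2 * β / w ^ 3) := by
  have e : κ₁ * (β ^ 2 / w ^ 4 - 2 * β / w ^ 3) = κ₁ * (β ^ 2 - 2 * β * w) / w ^ 4 := by
    field_simp
  rw [e, le_div_iff₀ (by positivity)]
  rcases le_or_gt w (β / 2) with h | h
  · have h11 : 2 * β * w ≤ β ^ 2 := by nlinarith
    nlinarith [mul_le_mul_of_nonneg_left h11 hκ₁, pow_pos hw 4]
  · have h8 : 16 * κ₁ * β ≤ β ^ 3 := by nlinarith
    have h9 : β ^ 3 ≤ 8 * w ^ 3 := by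
      nlinarith [mul_nonneg (mul_nonneg (by linarith : (0:ℝ) ≤ w - β / 2) hw.le) hw.le,
        mul_nonneg (by linarith : (0:ℝ) ≤ w - β / 2) (sq_nonneg (w + β / 2)),
        mul_nonneg (by linarith : (0:ℝ) ≤ w - β / 2) (sq_nonneg β)]
    nlinarith [mul_le_mul_of_nonneg_left h9 hκ₁, mul_le_mul_of_nonneg_left h8 hw.le,
      mul_pos (mul_pos hw hw) hw]

theorem le_diffusion_fst_wedge (hκ₁ : 0 ≤ κ₁) (hγ : 0 < γ) (hκγ : 64 * κ₁ ≤ γ * M)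
    (hMm : M < m) (hM : 0 < M) (hτ : 0 < τ) :
    -(γ * c ^ 2 * m ^ 3 / τ ^ 2) / 4
      ≤ κ₁ * (4 * c ^ 2 * γ ^ 2 * m ^ 2 / τ ^ 4 - 8 * c ^ 2 * γ * m ^ 2 / τ ^ 3) := by
  have hm : 0 < m := hM.trans hMm
  have hnum : 0 ≤ 4 * κ₁ * m ^ 2 * (γ - 2 * τ) + m ^ 3 * τ ^ 2 / 4 := by
    rcases le_or_gt τ (γ / 2) with h | h
    · have h1 : 0 ≤ 4 * κ₁ * m ^ 2 * (γ - 2 * τ) := by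
        apply mul_nonneg (by positivity)
        linarith
      nlinarith [pow_pos hm 3, sq_nonneg τ]
    · have hmτ : 32 * κ₁ ≤ m * τ := by nlinarith
      have h12 : 0 ≤ m ^ 2 * τ * (m * τ - 32 * κ₁) := by
        apply mul_nonneg (by positivity)
        linarith
      nlinarith [mul_nonneg (mul_nonneg hκ₁ (sq_nonneg m)) hγ.le]
  have e : κ₁ * (4 * c ^ 2 * γ ^ 2 * m ^ 2 / τ ^ 4 - 8 * c ^ 2 * γ * m ^ 2 / τ ^ 3)
      + (γ * c ^ 2 * m ^ 3 / τ ^ 2) / 4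
      = c ^ 2 * γ * (4 * κ₁ * m ^ 2 * (γ - 2 * τ) + m ^ 3 * τ ^ 2 / 4) / τ ^ 4 := by
    field_simp
    ring
  have : 0 ≤ c ^ 2 * γ * (4 * κ₁ * m ^ 2 * (γ - 2 * τ) + m ^ 3 * τ ^ 2 / 4) / τ ^ 4 := by
    positivity
  linarith

theorem le_diffusion_fst (hκ₁ : 0 ≤ κ₁) (hc : 0 < c) (hβ : 1 ≤ β) (hκβ : 16 * κ₁ ≤ β ^ 2)
    (hγ : 0 < γ) (hκγ : 64 * κ₁ ≤ γ * M) (hMm : M < m) (hM : 0 < M) (hw : 0 < w)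
    (hτ : 0 < τ) :
    -1 - (γ * c ^ 2 * m ^ 3 / τ ^ 2) / 4 ≤ κ₁ * ((β / w ^ 2 + 2 * c * γ * m / τ ^ 2) ^ 2
      - (2 * β / w ^ 3 - 2 * c * γ / τ ^ 2 + 8 * c ^ 2 * γ * m ^ 2 / τ ^ 3)) := by
  have hm : 0 < m := hM.trans hMm
  have hbarrier := neg_one_le_diffusion_barrier hκ₁ hβ hκβ hw
  have hwedge := le_diffusion_fst_wedge (c := c) hκ₁ hγ hκγ hMm hM hτ
  have hcross : 0 ≤ κ₁ * (4 * β * c * γ * m / (w ^ 2 * τ ^ 2) + 2 * c * γ / τ ^ 2) := by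
    have : 0 < β := by linarith
    positivity
  have e : κ₁ * ((β / w ^ 2 + 2 * c * γ * m / τ ^ 2) ^ 2
      - (2 * β / w ^ 3 - 2 * c * γ / τ ^ 2 + 8 * c ^ 2 * γ * m ^ 2 / τ ^ 3))
      = κ₁ * (β ^ 2 / w ^ 4 - 2 * β / w ^ 3)
        + κ₁ * (4 * β * c * γ * m / (w ^ 2 * τ ^ 2) + 2 * c * γ / τ ^ 2)
        + κ₁ * (4 * c ^ 2 * γ ^ 2 * m ^ 2 / τ ^ 4 - 8 * c ^ 2 * γ * m ^ 2 / τ ^ 3) := by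
    field_simp
    ring
  linarith

/-- Near the edges of the wedge, where `y²` is large, the squared gradient term wins. -/
theorem diffusion_snd_numerator_nonneg (hc : 0 < c) (hγ : 0 < γ) (hγM : γ ≤ 2 * c * M)
    (hM : 1 ≤ M) (hMm : M < m) (hτ : 0 < τ) (hy : y ^ 2 = c * m ^ 2 - τ) (h : τ ≤ γ / 4) :
    0 ≤ 4 * γ ^ 2 * y ^ 2 - 2 * γ * τ ^ 2 - 8 * γ * y ^ 2 * τ := by
  have hMm2 : M ^ 2 ≤ m ^ 2 := by nlinarith
  have hcM : γ ≤ 2 * c * M ^ 2 := by nlinarith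
  have hyy : γ / 4 ≤ y ^ 2 := by nlinarith
  have p1 : 0 ≤ 4 * γ * y ^ 2 * ((γ - 2 * τ) - γ / 2) :=
    mul_nonneg (mul_nonneg (by positivity) (sq_nonneg y)) (by linarith)
  have r1 : 2 * γ * τ ^ 2 ≤ γ ^ 3 / 8 := by nlinarith
  have r2 : γ ^ 3 / 2 ≤ 2 * γ ^ 2 * y ^ 2 := by nlinarith
  nlinarith

theorem le_diffusion_snd_numerator (hκ₂ : 0 ≤ κ₂) (hc : 0 < c) (hγ : 0 < γ)
    (hκγ : 32 * κ₂ ≤ γ) (hκM : 128 * κ₂ ≤ c * γ * M) (hMm : M < m) (hM : 0 < M)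
    (hτ : 0 < τ) (hy : y ^ 2 = c * m ^ 2 - τ) (h : γ / 4 < τ) :
    -(τ ^ 4) - γ * c ^ 2 * m ^ 3 * τ ^ 2 / 4
      ≤ κ₂ * (4 * γ ^ 2 * y ^ 2 - 2 * γ * τ ^ 2 - 8 * γ * y ^ 2 * τ) := by
  have f1 : 2 * κ₂ * γ ≤ τ ^ 2 := by nlinarith
  have g1 : κ₂ * (2 * γ * τ ^ 2) ≤ τ ^ 4 := by nlinarith [sq_nonneg τ]
  have hMγ : M * (γ / 4) ≤ m * τ := by nlinarith
  have hcmτ : 32 * κ₂ ≤ c * m * τ := by nlinarith [mul_le_mul_of_nonneg_left hMγ hc.le]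
  have h10 : 8 * κ₂ * y ^ 2 ≤ c * m ^ 2 * (c * m * τ) / 4 := by
    nlinarith [mul_nonneg (mul_nonneg hc.le (sq_nonneg m))
      (by linarith : (0:ℝ) ≤ c * m * τ - 32 * κ₂)]
  have g2 : κ₂ * (8 * γ * y ^ 2 * τ) ≤ γ * c ^ 2 * m ^ 3 * τ ^ 2 / 4 := by
    nlinarith [mul_le_mul_of_nonneg_left h10 (mul_pos hγ hτ).le]
  nlinarith [mul_nonneg (mul_nonneg hκ₂ (by positivity : (0:ℝ) ≤ 4 * γ ^ 2)) (sq_nonneg y)]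

theorem le_diffusion_snd (hκ₂ : 0 ≤ κ₂) (hc : 0 < c) (hγ : 0 < γ) (hκγ : 32 * κ₂ ≤ γ)
    (hκM : 128 * κ₂ ≤ c * γ * M) (hγM : γ ≤ 2 * c * M) (hM : 1 ≤ M) (hMm : M < m)
    (hτ : 0 < τ) (hy : y ^ 2 = c * m ^ 2 - τ) :
    -1 - (γ * c ^ 2 * m ^ 3 / τ ^ 2) / 4
      ≤ κ₂ * ((2 * γ * y / τ ^ 2) ^ 2 - (2 * γ / τ ^ 2 + 8 * γ * y ^ 2 / τ ^ 3)) := by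
  have hm : 0 < m := by linarith
  have e : κ₂ * ((2 * γ * y / τ ^ 2) ^ 2 - (2 * γ / τ ^ 2 + 8 * γ * y ^ 2 / τ ^ 3))
      = κ₂ * (4 * γ ^ 2 * y ^ 2 - 2 * γ * τ ^ 2 - 8 * γ * y ^ 2 * τ) / τ ^ 4 := by
    field_simp
    ring
  rw [e]
  rcases le_or_gt τ (γ / 4) with h | h
  · have := diffusion_snd_numerator_nonneg hc hγ hγM hM hMm hτ hy h
    have : 0 ≤ κ₂ * (4 * γ ^ 2 * y ^ 2 - 2 * γ * τ ^ 2 - 8 * γ * y ^ 2 * τ) / τ ^ 4 := by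
      positivity
    have : 0 ≤ γ * c ^ 2 * m ^ 3 / τ ^ 2 / 4 := by positivity
    linarith
  · have e' : -1 - γ * c ^ 2 * m ^ 3 / τ ^ 2 / 4
        = (-(τ ^ 4) - γ * c ^ 2 * m ^ 3 * τ ^ 2 / 4) / τ ^ 4 := by
      field_simp
    rw [e']
    gcongr
    exact le_diffusion_snd_numerator hκ₂ hc hγ hκγ hκM hMm (by linarith) hτ hy h

end Estimates

structure WedgeConstants (a₁ a₂ α₁ α₂ κ₁ κ₂ c β γ M : ℝ) : Prop where
  α₂_pos : 0 < α₂
  c_pos : 0 < c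
  α₁_eq : α₁ = α₂ + 2 * c
  κ₁_nonneg : 0 ≤ κ₁
  κ₂_nonneg : 0 ≤ κ₂
  one_le_β : 1 ≤ β
  κ₁_le_β : 16 * κ₁ ≤ β ^ 2
  six_le_α₁β : 6 ≤ α₁ * β
  γ_pos : 0 < γ
  κ₂_le_γ : 32 * κ₂ ≤ γ
  one_le_M : 1 ≤ M
  a₁_sub_a₂_le : 2 * |a₁ - a₂| ≤ c * M
  a₂_le : |a₂| ≤ c * M
  a₁_le : 2 * |a₁| ≤ α₂ * M
  κ₁_le_M : 64 * κ₁ ≤ γ * M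
  κ₂_le_M : 128 * κ₂ ≤ c * γ * M
  γ_le_M : γ ≤ 2 * c * M

theorem exists_wedgeConstants (a₁ a₂ : ℝ) {α₁ α₂ κ₁ κ₂ : ℝ} (hα₂ : 0 < α₂) (hα : α₂ < α₁)
    (hκ₁ : 0 ≤ κ₁) (hκ₂ : 0 ≤ κ₂) :
    ∃ β γ M, WedgeConstants a₁ a₂ α₁ α₂ κ₁ κ₂ ((α₁ - α₂) / 2) β γ M := by
  have hα₁ : 0 < α₁ := hα₂.trans hα
  have hc : 0 < (α₁ - α₂) / 2 := by linarith
  have hγ : 0 < 32 * κ₂ + 1 := by linarith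
  have h6 : 0 < 6 / α₁ := by positivity
  have hβ : 1 ≤ 16 * κ₁ + 1 + 6 / α₁ := by linarith
  have hβκ : 16 * κ₁ ≤ 16 * κ₁ + 1 + 6 / α₁ := by linarith
  have hαβ : 6 ≤ α₁ * (16 * κ₁ + 1 + 6 / α₁) := by
    rw [mul_add, mul_div_cancel₀ _ hα₁.ne']
    nlinarith
  have large {a : ℝ} (ha : 0 < a) (k : ℝ) : ∀ᶠ M in atTop, k ≤ a * M :=
    (tendsto_id.const_mul_atTop ha).eventually_ge_atTop k
  obtain ⟨M, hM, h₁, h₂, h₃, h₄, h₅, h₆⟩ := ((eventually_ge_atTop 1).and <|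
    (large hc _).and <| (large hc _).and <| (large hα₂ _).and <| (large hγ _).and <|
    (large (mul_pos hc hγ) _).and <| large (mul_pos two_pos hc) (32 * κ₂ + 1)).exists
  exact ⟨16 * κ₁ + 1 + 6 / α₁, 32 * κ₂ + 1, M, hα₂, hc, by ring, hκ₁, hκ₂, hβ,
    hβκ.trans (le_self_pow₀ hβ two_ne_zero), hαβ, hγ, by linarith, hM, h₁, h₂, h₃, h₄, h₅,
    by linarith⟩

section Wedge

variable {a₁ a₂ α₁ α₂ κ₁ κ₂ c β γ M : ℝ}

/-- The right-hand side is `L (exp (-V)) / exp (-V)` for the potential `V = β / w + γ / τ`. -/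
theorem one_le_wedge_rate (h : WedgeConstants a₁ a₂ α₁ α₂ κ₁ κ₂ c β γ M) {x y w τ : ℝ}
    (hw : w = -x - M) (hτ : τ = c * x ^ 2 - y ^ 2) (hw0 : 0 < w) (hτ0 : 0 < τ) :
    1 ≤ -(a₁ * x - α₁ * x ^ 2 + y ^ 2) * (β / w ^ 2 - 2 * c * γ * x / τ ^ 2)
      - (a₂ * y - α₂ * x * y) * (2 * γ * y / τ ^ 2)
      + κ₁ * ((β / w ^ 2 - 2 * c * γ * x / τ ^ 2) ^ 2
        - (2 * β / w ^ 3 - 2 * c * γ / τ ^ 2 + 8 * c ^ 2 * γ * x ^ 2 / τ ^ 3))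
      + κ₂ * ((2 * γ * y / τ ^ 2) ^ 2 - (2 * γ / τ ^ 2 + 8 * γ * y ^ 2 / τ ^ 3)) := by
  obtain ⟨m, rfl⟩ : ∃ m, x = -m := ⟨-x, (neg_neg x).symm⟩
  have hM : 0 < M := by linarith [h.one_le_M]
  have hMm : M < m := by linarith
  have hm : 0 < m := hM.trans hMm
  have hy : y ^ 2 = c * m ^ 2 - τ := by rw [hτ]; ring
  have hβ : 0 < β := by linarith [h.one_le_β]
  have hγ := h.γ_pos
  have hS : 0 ≤ γ * c ^ 2 * m ^ 3 / τ ^ 2 := by positivity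
  have h₁ := three_le_drift_barrier (y := y) h.α₂_pos h.α₁_eq h.a₁_le hMm hM (by linarith) hβ
    h.six_le_α₁β hw0 (by linarith)
  have h₂ := le_drift_wedge (a₁ := a₁) h.α₂_pos h.α₁_eq h.c_pos hγ h.a₁_sub_a₂_le h.a₂_le
    hMm hM hτ0 hy
  have h₃ := le_diffusion_fst h.κ₁_nonneg h.c_pos h.one_le_β h.κ₁_le_β hγ h.κ₁_le_M hMm hM
    hw0 hτ0
  have h₄ := le_diffusion_snd h.κ₂_nonneg h.c_pos hγ h.κ₂_le_γ h.κ₂_le_M h.γ_le_M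
    h.one_le_M hMm hτ0 hy
  have e : -(a₁ * -m - α₁ * (-m) ^ 2 + y ^ 2) * (β / w ^ 2 - 2 * c * γ * -m / τ ^ 2)
      - (a₂ * y - α₂ * -m * y) * (2 * γ * y / τ ^ 2)
      + κ₁ * ((β / w ^ 2 - 2 * c * γ * -m / τ ^ 2) ^ 2
        - (2 * β / w ^ 3 - 2 * c * γ / τ ^ 2 + 8 * c ^ 2 * γ * (-m) ^ 2 / τ ^ 3))
      = -(a₁ * (-m) - α₁ * (-m) ^ 2 + y ^ 2) * (β / w ^ 2)
      + ((a₁ * (-m) - α₁ * (-m) ^ 2 + y ^ 2) * (-2 * c * γ * m / τ ^ 2)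
        - (a₂ * y - α₂ * (-m) * y) * (2 * γ * y / τ ^ 2))
      + κ₁ * ((β / w ^ 2 + 2 * c * γ * m / τ ^ 2) ^ 2
        - (2 * β / w ^ 3 - 2 * c * γ / τ ^ 2 + 8 * c ^ 2 * γ * m ^ 2 / τ ^ 3)) := by
    ring
  rw [e]
  linarith

theorem wedgeBump_le_Lop_of_mem (h : WedgeConstants a₁ a₂ α₁ α₂ κ₁ κ₂ c β γ M) {p : ℝ × ℝ}
    (hp : p ∈ wedge M c) :
    wedgeBump M β c γ p ≤ Lop a₁ a₂ α₁ α₂ κ₁ κ₂ (wedgeBump M β c γ) p := by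
  obtain ⟨x, y⟩ := p
  have hβ : 0 < β := by linarith [h.one_le_β]
  have hline₁ : ∀ᶠ t in 𝓝 x, (t, y) ∈ wedge M c :=
    (continuous_id.prodMk continuous_const).continuousAt.preimage_mem_nhds
      (isOpen_wedge.mem_nhds hp)
  have hline₂ : ∀ᶠ s in 𝓝 y, (x, s) ∈ wedge M c :=
    (continuous_const.prodMk continuous_id).continuousAt.preimage_mem_nhds
      (isOpen_wedge.mem_nhds hp)
  have hexp₁ : (fun t => wedgeBump M β c γ (t, y))
      =ᶠ[𝓝 x] fun t => rexp (-(β / (-t - M) + γ / (c * t ^ 2 - y ^ 2))) :=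
    hline₁.mono fun t ht => wedgeBump_eq_exp_neg ht hβ h.γ_pos
  have hexp₂ : (fun s => wedgeBump M β c γ (x, s))
      =ᶠ[𝓝 y] fun s => rexp (-(β / (-x - M) + γ / (c * x ^ 2 - s ^ 2))) :=
    hline₂.mono fun s hs => wedgeBump_eq_exp_neg hs hβ h.γ_pos
  rw [Lop_eq_mul_of_eventuallyEq_exp_neg a₁ a₂ α₁ α₂ κ₁ κ₂ hexp₁
    (hline₁.mono fun t ht => hasDerivAt_wedgePotential_fst ht.1.ne' ht.2.ne')
    (hasDerivAt_wedgePotential_fst_deriv hp.1.ne' hp.2.ne') hexp₂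
    (hline₂.mono fun s hs => hasDerivAt_wedgePotential_snd hs.2.ne')
    (hasDerivAt_wedgePotential_snd_deriv hp.2.ne')]
  exact le_mul_of_one_le_right (wedgeBump_nonneg _) (one_le_wedge_rate h rfl rfl hp.1 hp.2)

theorem wedgeBump_le_Lop (h : WedgeConstants a₁ a₂ α₁ α₂ κ₁ κ₂ c β γ M) (p : ℝ × ℝ) :
    wedgeBump M β c γ p ≤ Lop a₁ a₂ α₁ α₂ κ₁ κ₂ (wedgeBump M β c γ) p := by
  by_cases hp : p ∈ wedge M c
  · exact wedgeBump_le_Lop_of_mem h hp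
  · have hzero := wedgeBump_eq_zero hp (zero_le_one.trans h.one_le_β) h.γ_pos.le
    rw [hzero]
    refine Lop_nonneg_of_isMinOn _ _ _ _ h.κ₁_nonneg h.κ₂_nonneg
      (contDiff_wedgeBump (n := 0)).continuous (isMinOn_univ_iff.2 fun q => ?_)
    rw [hzero]
    exact wedgeBump_nonneg q

end Wedge

/-- if `α₁ > α₂ > 0`, `κ₁ ≥ 0`, `κ₂ > 0`, there are a bounded nonnegative
`C^∞` function `Ψ`, a nonempty open set `A` on which `Ψ > 0`, and `E > 0` with
`LΨ ≥ E·Ψ` on all of `ℝ²`. -/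
theorem statement19 (a₁ a₂ α₁ α₂ κ₁ κ₂ : ℝ) (hα₂ : 0 < α₂) (hα : α₂ < α₁)
    (hκ₁ : 0 ≤ κ₁) (hκ₂ : 0 < κ₂) :
    ∃ Ψ : ℝ × ℝ → ℝ, ContDiff ℝ (⊤ : ℕ∞) Ψ ∧
      (∀ z : ℝ × ℝ, 0 ≤ Ψ z) ∧
      (∃ B : ℝ, ∀ z : ℝ × ℝ, Ψ z ≤ B) ∧
      ∃ A : Set (ℝ × ℝ), A.Nonempty ∧ IsOpen A ∧ (∀ z ∈ A, 0 < Ψ z) ∧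
        ∃ E > (0:ℝ), ∀ z : ℝ × ℝ, E * Ψ z ≤ Lop a₁ a₂ α₁ α₂ κ₁ κ₂ Ψ z := by
  obtain ⟨β, γ, M, h⟩ := exists_wedgeConstants a₁ a₂ hα₂ hα hκ₁ hκ₂.le
  have hβ : 0 < β := zero_lt_one.trans_le h.one_le_β
  refine ⟨wedgeBump M β ((α₁ - α₂) / 2) γ, contDiff_wedgeBump, wedgeBump_nonneg,
    ⟨1, wedgeBump_le_one⟩, wedge M ((α₁ - α₂) / 2), wedge_nonempty h.c_pos, isOpen_wedge,
    fun z hz => wedgeBump_pos hz hβ h.γ_pos, 1, one_pos, fun z => ?_⟩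
  rw [one_mul]
  exact wedgeBump_le_Lop h z
end
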